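/- arXiv:1211.6639 — 3 statements merged into one kernel-verified Lean document; each statement's English description precedes it below -/
import Mathlib

section
/- For all n ≥ 0, the Bernoulli polynomial B_n(x) satisfies B_n(x) = E_n(x) + Σ_{k=0}^{n-2} C(n,k)·B_{n-k}·E_k(x), where B_j = B_j(0) are the Bernoulli numbers and E_k(x) are the Euler polynomials. -/
open Polynomial Finset

/-! Inverting the defining recurrence gives `x^m = (E_m(x) + ∑_{k ≤ m} C(m,k) E_k(x)) / 2`.
Substituting this into `B_n(x) = ∑_j C(n,j) B_{n-j} x^j` and collecting terms with
`C(n,j) C(j,k) = C(n,k) C(n-k,j-k)`, the coefficient of `E_k` becomes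
`C(n,k) (B_{n-k} + B_{n-k}(1)) / 2`, where `B_m(1) = B'_m` is the Bernoulli number with the
opposite sign convention `B'_1 = +1/2`. The two conventions agree except at `m = 1`, where they
cancel: the term `k = n - 1` drops out, and `k = n` contributes `E_n(x)`. -/

/-- Euler polynomials `E_n(x)`, defined over `ℚ` by the recurrence
`E_n(x) = x^n - (1/2) ∑_{k<n} C(n,k) E_k(x)`, equivalent to the
generating function `(2/(e^t+1)) e^{xt} = ∑ E_n(x) t^n/n!`. -/
noncomputable def eulerPoly : ℕ → ℚ[X]
  | n => X ^ n - Polynomial.C (1/2 : ℚ) *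
      ∑ k : Fin n, Polynomial.C (n.choose k : ℚ) * eulerPoly k

/-- Euler polynomials of order `r`, `E_n^{(r)}(x)`, with generating function
`(2/(e^t+1))^r e^{xt}`; defined by Cauchy-product recursion on `r`, using the
Euler numbers `E_k = E_k(0)`. -/
noncomputable def eulerPolyOrder : ℕ → ℕ → ℚ[X]
  | 0, n => X ^ n
  | r+1, n => ∑ k ∈ Finset.range (n+1),
      Polynomial.C ((n.choose k : ℚ) * (eulerPoly k).eval 0) * eulerPolyOrder r (n-k)

theorem eulerPoly_eq_sub_sum (m : ℕ) : eulerPoly m =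
    X ^ m - C (1 / 2 : ℚ) * ∑ k ∈ range m, C (m.choose k : ℚ) * eulerPoly k := by
  rw [eulerPoly, Fin.sum_univ_eq_sum_range (fun k ↦ C (m.choose k : ℚ) * eulerPoly k)]

theorem X_pow_eq_eulerPoly (m : ℕ) :
    (X : ℚ[X]) ^ m =
      C (1 / 2 : ℚ) * (eulerPoly m + ∑ k ∈ range (m + 1), C (m.choose k : ℚ) * eulerPoly k) := by
  have two_mul_half : C (1 / 2 : ℚ) * 2 = 1 := by rw [← C_ofNat, ← C_mul]; norm_num
  rw [sum_range_succ, Nat.choose_self, Nat.cast_one, C_1, one_mul, eulerPoly_eq_sub_sum]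
  linear_combination
    (C (1 / 2 : ℚ) * ∑ k ∈ range m, C (m.choose k : ℚ) * eulerPoly k - X ^ m) * two_mul_half

theorem sum_bernoulli_sub_mul_choose (m : ℕ) :
    ∑ l ∈ range (m + 1), _root_.bernoulli (m - l) * m.choose l = bernoulli' m := by
  rw [← Polynomial.bernoulli_eval_one, Polynomial.bernoulli_def, eval_finsetSum]
  simp

theorem sum_sum_bernoulli_mul_choose_mul_choose_smul {M : Type*} [AddCommMonoid M] [Module ℚ M]
    (n : ℕ) (f : ℕ → M) :
    ∑ j ∈ range (n + 1), ∑ k ∈ range (j + 1),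
        (_root_.bernoulli (n - j) * n.choose j * j.choose k) • f k =
      ∑ k ∈ range (n + 1), (n.choose k * bernoulli' (n - k)) • f k := by
  simp only [range_eq_Ico]
  rw [← sum_Ico_Ico_comm]
  refine sum_congr rfl fun k hk ↦ ?_
  have hkn : k ≤ n := Nat.lt_succ_iff.mp (mem_Ico.mp hk).2
  rw [← Finset.sum_smul, ← sum_bernoulli_sub_mul_choose, mul_sum, sum_Ico_eq_sum_range,
    ← Nat.sub_add_comm hkn]
  congr 1
  refine sum_congr rfl fun l _ ↦ ?_
  have choose_mul_choose :
      (n.choose (k + l) * (k + l).choose k : ℚ) = n.choose k * (n - k).choose l := by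
    exact_mod_cast (Nat.choose_mul (Nat.le_add_right k l)).trans (by rw [Nat.add_sub_cancel_left])
  rw [Nat.sub_add_eq, mul_assoc, choose_mul_choose]
  ring

theorem bernoulli_eq_sum_eulerPoly (n : ℕ) :
    Polynomial.bernoulli n = ∑ k ∈ range (n + 1),
      C ((n.choose k : ℚ) * ((_root_.bernoulli (n - k) + bernoulli' (n - k)) / 2)) *
        eulerPoly k := by
  calc Polynomial.bernoulli n
      = ∑ j ∈ range (n + 1), (_root_.bernoulli (n - j) * n.choose j) • (X : ℚ[X]) ^ j := by
        simp only [Polynomial.bernoulli_def, smul_X_eq_monomial]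
    _ = (1 / 2 : ℚ) •
          (∑ j ∈ range (n + 1), (_root_.bernoulli (n - j) * n.choose j) • eulerPoly j +
            ∑ j ∈ range (n + 1), ∑ k ∈ range (j + 1),
              (_root_.bernoulli (n - j) * n.choose j * j.choose k) • eulerPoly k) := by
        simp only [X_pow_eq_eulerPoly, C_mul', smul_add, smul_sum, sum_add_distrib, smul_smul]
        congr 1 <;> refine sum_congr rfl fun j _ ↦ ?_
        · rw [mul_comm]
        · exact sum_congr rfl fun k _ ↦ by ring_nf
    _ = _ := by
        rw [sum_sum_bernoulli_mul_choose_mul_choose_smul, ← sum_add_distrib, smul_sum]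
        simp only [C_mul', smul_smul, ← add_smul]
        refine sum_congr rfl fun k _ ↦ ?_
        congr 1
        ring

theorem bernoulli_poly_eq_euler (n : ℕ) :
    Polynomial.bernoulli n =
      eulerPoly n +
        ∑ k ∈ Finset.range (n - 1),
          Polynomial.C ((n.choose k : ℚ) * _root_.bernoulli (n - k)) * eulerPoly k := by
  have average_of_ne_one {j : ℕ} (hj : j ≠ 1) :
      (_root_.bernoulli j + bernoulli' j) / 2 = _root_.bernoulli j := by
    rw [← bernoulli_eq_bernoulli'_of_ne_one hj, add_self_div_two]
  rw [bernoulli_eq_sum_eulerPoly]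
  cases n with
  | zero => simp
  | succ m =>
    have average_one : (_root_.bernoulli 1 + bernoulli' 1) / 2 = 0 := by
      rw [_root_.bernoulli_one, bernoulli'_one]; norm_num
    rw [sum_range_succ, sum_range_succ, Nat.add_sub_cancel, Nat.sub_self, Nat.choose_self,
      average_of_ne_one zero_ne_one, Nat.add_sub_cancel_left, average_one]
    simp only [_root_.bernoulli_zero, Nat.cast_one, mul_zero, one_mul, C_0, C_1, zero_mul,
      add_zero]
    rw [add_comm]
    refine congrArg _ (sum_congr rfl fun k hk ↦ ?_)
    rw [average_of_ne_one (by grind)]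
end

section
/- For all n ≥ 0 and r ≥ 1, E_n(x) = (1/2^r)·Σ_{k=0}^{n} C(n,k)·(Σ_{l=0}^{r} C(r,l)·E_{n-k}(l))·E_k^{(r)}(x), expressing the ordinary Euler polynomial in the basis of order-r Euler polynomials. -/
open Polynomial Finset

/-!
With `E(x, t) = ∑ Eₙ(x) tⁿ/n!`, the recurrence defining `Eₙ` says `(eᵗ + 1) E(x, t) = 2 e^{xt}`,
so `E(x, t) = ε(t) e^{xt}` where `ε(t) = E(0, t)` satisfies `(eᵗ + 1) ε(t) = 2`, and the order-`r`
polynomials have generating function `ε(t)ʳ e^{xt}`. Hence `∑ₗ C(r, l) E(l, t) = ε(t) (eᵗ + 1)ʳ`, and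
multiplying by `ε(t)ʳ e^{xt}` gives `2ʳ E(x, t)`; comparing coefficients of `tⁿ` is the theorem.
Everything happens in `ℚ[X]⟦t⟧`, which is a domain, so `eᵗ + 1` is cancelled rather than inverted.
-/

open scoped Nat PowerSeries

namespace PowerSeries

variable (A : Type*) [CommRing A] [Algebra ℚ A]

noncomputable def egf : (ℕ → A) →ₗ[A] A⟦X⟧ where
  toFun a := mk fun n => algebraMap ℚ A (n !)⁻¹ * a n
  map_add' a b := by ext; simp [mul_add]
  map_smul' c a := by ext; simp [mul_left_comm]

variable {A}

@[simp]
theorem coeff_egf (a : ℕ → A) (n : ℕ) :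
    coeff n (egf A a) = algebraMap ℚ A (n !)⁻¹ * a n := by
  simp [egf]

theorem egf_injective : Function.Injective (egf A) := by
  intro a b h
  funext n
  have hunit : IsUnit (algebraMap ℚ A (n !)⁻¹) :=
    (isUnit_iff_ne_zero.2 (by positivity)).map _
  simpa [hunit.mul_right_inj] using congrArg (coeff n) h

theorem egf_mul (a b : ℕ → A) :
    egf A a * egf A b =
      egf A fun n => ∑ k ∈ range (n + 1), n.choose k • (a k * b (n - k)) := by
  ext n
  rw [coeff_mul, Nat.sum_antidiagonal_eq_sum_range_succ_mk, coeff_egf, mul_sum]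
  refine sum_congr rfl fun k hk => ?_
  have hkn : k ≤ n := Nat.lt_succ_iff.1 (mem_range.1 hk)
  have hfact : (k ! : ℚ)⁻¹ * ((n - k)! : ℚ)⁻¹ = (n ! : ℚ)⁻¹ * n.choose k := by
    rw [Nat.cast_choose ℚ hkn]
    field_simp
  have hfactA := congrArg (algebraMap ℚ A) hfact
  simp only [map_mul, map_natCast] at hfactA
  simp only [coeff_egf, nsmul_eq_mul]
  linear_combination a k * b (n - k) * hfactA

theorem egf_one : egf A 1 = exp A := by
  ext n
  simp [coeff_exp]

theorem egf_pow (a : A) : egf A (a ^ ·) = rescale a (exp A) := by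
  ext n
  simp [coeff_exp, mul_comm]

theorem map_egf {B : Type*} [CommRing B] [Algebra ℚ B] (f : A →+* B) (a : ℕ → A) :
    map f (egf A a) = egf B (f ∘ a) := by
  ext n
  simp

theorem exp_add_one_ne_zero [Nontrivial A] : exp A + 1 ≠ 0 := by
  have := algebraRat.charZero A
  intro h
  simpa [one_add_one_eq_two] using congrArg constantCoeff h

end PowerSeries

open PowerSeries (egf exp rescale)

theorem sum_choose_nsmul_eulerPoly_add_eulerPoly (n : ℕ) :
    ∑ k ∈ range (n + 1), n.choose k • eulerPoly k + eulerPoly n = 2 * X ^ n := by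
  have hrec := eulerPoly.eq_1 n
  rw [Fin.sum_univ_eq_sum_range (fun k => C (n.choose k : ℚ) * eulerPoly k)] at hrec
  have h2 : (2 : ℚ[X]) * C (1 / 2) = 1 := by rw [← map_ofNat C 2, ← C_mul]; norm_num
  simp only [sum_range_succ, Nat.choose_self, nsmul_eq_mul, ← C_eq_natCast, Nat.cast_one, C_1]
  linear_combination (2 : ℚ[X]) * hrec - (∑ k ∈ range n, C (n.choose k : ℚ) * eulerPoly k) * h2

/-- `2 e^{at} / (eᵗ + 1)`. -/
noncomputable def eulerEgf (a : ℚ) : ℚ⟦X⟧ := egf ℚ fun n => (eulerPoly n).eval a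

theorem map_evalRingHom_egf_eulerPoly (a : ℚ) :
    PowerSeries.map (evalRingHom a) (egf ℚ[X] eulerPoly) = eulerEgf a :=
  PowerSeries.map_egf _ _

theorem exp_add_one_mul_egf_eulerPoly :
    (exp ℚ[X] + 1) * egf ℚ[X] eulerPoly = 2 * rescale X (exp ℚ[X]) := by
  rw [← PowerSeries.egf_pow, ← PowerSeries.egf_one, mul_comm, mul_add, mul_one,
    PowerSeries.egf_mul, ← map_add, two_mul, ← map_add]
  congr 1
  funext n
  simp only [Pi.add_apply, Pi.one_apply, mul_one]
  rw [sum_choose_nsmul_eulerPoly_add_eulerPoly, two_mul]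

theorem exp_add_one_mul_eulerEgf_zero : (exp ℚ + 1) * eulerEgf 0 = 2 := by
  have h := congrArg (PowerSeries.map (evalRingHom 0)) exp_add_one_mul_egf_eulerPoly
  rwa [map_mul, map_add, PowerSeries.map_exp, map_one, map_evalRingHom_egf_eulerPoly, map_mul,
    map_ofNat, ← PowerSeries.rescale_map, PowerSeries.map_exp, coe_evalRingHom, eval_X,
    PowerSeries.rescale_zero_apply, PowerSeries.constantCoeff_exp, map_one, mul_one] at h

theorem exp_add_one_mul_map_C_eulerEgf_zero :
    (exp ℚ[X] + 1) * PowerSeries.map C (eulerEgf 0) = 2 := by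
  simpa [PowerSeries.map_exp, map_ofNat] using
    congrArg (PowerSeries.map C) exp_add_one_mul_eulerEgf_zero

theorem egf_eulerPoly :
    egf ℚ[X] eulerPoly = PowerSeries.map C (eulerEgf 0) * rescale X (exp ℚ[X]) := by
  apply mul_left_cancel₀ PowerSeries.exp_add_one_ne_zero
  rw [exp_add_one_mul_egf_eulerPoly, ← mul_assoc, exp_add_one_mul_map_C_eulerEgf_zero]

theorem eulerEgf_eq (a : ℚ) : eulerEgf a = eulerEgf 0 * rescale a (exp ℚ) := by
  have hC : PowerSeries.map (evalRingHom a) (PowerSeries.map C (eulerEgf 0)) = eulerEgf 0 := by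
    ext n
    simp
  rw [← map_evalRingHom_egf_eulerPoly, egf_eulerPoly, map_mul, hC, ← PowerSeries.rescale_map,
    PowerSeries.map_exp, coe_evalRingHom, eval_X]

theorem egf_eulerPolyOrder (r : ℕ) :
    egf ℚ[X] (eulerPolyOrder r) = PowerSeries.map C (eulerEgf 0) ^ r * rescale X (exp ℚ[X]) := by
  induction r with
  | zero =>
    rw [pow_zero, one_mul, ← PowerSeries.egf_pow]
    congr 1
  | succ r ih =>
    rw [pow_succ', mul_assoc, ← ih, eulerEgf, PowerSeries.map_egf, PowerSeries.egf_mul]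
    congr 1
    funext n
    rw [eulerPolyOrder]
    refine sum_congr rfl fun k _ => ?_
    simp only [Function.comp_apply, map_mul, nsmul_eq_mul, ← C_eq_natCast, mul_assoc]

noncomputable def eulerBinomialSum (r m : ℕ) : ℚ :=
  ∑ l ∈ range (r + 1), (r.choose l : ℚ) * (eulerPoly m).eval (l : ℚ)

theorem egf_eulerBinomialSum (r : ℕ) :
    egf ℚ (eulerBinomialSum r) = eulerEgf 0 * (exp ℚ + 1) ^ r := by
  have hsum : egf ℚ (eulerBinomialSum r) = ∑ l ∈ range (r + 1), r.choose l • eulerEgf l := by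
    simp only [eulerEgf, ← map_nsmul, ← map_sum]
    congr 1
    funext m
    simp [eulerBinomialSum, nsmul_eq_mul]
  rw [hsum, add_pow, mul_sum]
  refine sum_congr rfl fun l _ => ?_
  rw [eulerEgf_eq, ← PowerSeries.exp_pow_eq_rescale_exp, one_pow, mul_one, nsmul_eq_mul]
  ring

theorem egf_eulerPolyOrder_mul_egf_eulerBinomialSum (r : ℕ) :
    egf ℚ[X] (eulerPolyOrder r) * egf ℚ[X] (C ∘ eulerBinomialSum r) =
      egf ℚ[X] (2 ^ r • eulerPoly) := by
  rw [← PowerSeries.map_egf, egf_eulerBinomialSum, egf_eulerPolyOrder, map_nsmul, egf_eulerPoly,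
    map_mul, map_pow, map_add, PowerSeries.map_exp, map_one, nsmul_eq_mul]
  calc _ = ((exp ℚ[X] + 1) * PowerSeries.map C (eulerEgf 0)) ^ r *
        (PowerSeries.map C (eulerEgf 0) * rescale X (exp ℚ[X])) := by rw [mul_pow]; ring
    _ = _ := by rw [exp_add_one_mul_map_C_eulerEgf_zero]; push_cast; rfl

theorem euler_poly_in_order_r_basis_general (n r : ℕ) :
    eulerPoly n =
      Polynomial.C ((1 : ℚ) / 2 ^ r) *
        ∑ k ∈ Finset.range (n + 1),
          Polynomial.C ((n.choose k : ℚ) *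
              ∑ l ∈ Finset.range (r + 1),
                (r.choose l : ℚ) * (eulerPoly (n - k)).eval (l : ℚ)) *
            eulerPolyOrder r k := by
  have hcoeff := congrFun (PowerSeries.egf_injective
    ((egf_eulerPolyOrder_mul_egf_eulerBinomialSum r).symm.trans (PowerSeries.egf_mul _ _))) n
  have hsum : ∑ k ∈ range (n + 1),
      C ((n.choose k : ℚ) * eulerBinomialSum r (n - k)) * eulerPolyOrder r k =
        2 ^ r • eulerPoly n := by
    rw [← Pi.smul_apply, hcoeff]
    refine sum_congr rfl fun k _ => ?_
    simp only [Function.comp_apply, map_mul, nsmul_eq_mul, ← C_eq_natCast]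
    ring
  calc eulerPoly n = C ((1 : ℚ) / 2 ^ r) * (2 ^ r • eulerPoly n) := by
        rw [nsmul_eq_mul, ← mul_assoc, ← C_eq_natCast, ← C_mul]
        norm_num
    _ = _ := by rw [← hsum]; rfl

theorem euler_poly_in_order_r_basis (n r : ℕ) (hr : 1 ≤ r) :
    eulerPoly n =
      Polynomial.C ((1 : ℚ) / 2 ^ r) *
        ∑ k ∈ Finset.range (n + 1),
          Polynomial.C ((n.choose k : ℚ) *
              ∑ l ∈ Finset.range (r + 1),
                (r.choose l : ℚ) * (eulerPoly (n - k)).eval (l : ℚ)) *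
            eulerPolyOrder r k :=
  euler_poly_in_order_r_basis_general n r
end

section
/- For any polynomial p(x) of degree ≤ n and any r ≥ 1, if p(x) = Σ_{k=0}^{n} b_k·E_k^{(r)}(x) (expansion in the basis of order-r Euler polynomials), then b_k = (1/(2^r·k!))·Σ_{l=0}^{r} C(r,l)·p^{(k)}(l), where p^{(k)} denotes the k-th derivative. -/
open Polynomial Finset

lemma eulerPoly_def (n : ℕ) : eulerPoly n = X ^ n - Polynomial.C (1/2 : ℚ) *
      ∑ k ∈ Finset.range n, Polynomial.C (n.choose k : ℚ) * eulerPoly k := by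
  rw [eulerPoly, Finset.sum_range]

lemma eulerPoly_zero : eulerPoly 0 = 1 := by
  rw [eulerPoly_def]; simp

-- e_n notation
noncomputable def en (n : ℕ) : ℚ := (eulerPoly n).eval 0

lemma en_zero : en 0 = 1 := by simp [en, eulerPoly_zero]

lemma en_sum (n : ℕ) (hn : n ≠ 0) :
    ∑ k ∈ Finset.range (n+1), (n.choose k : ℚ) * en k = - en n := by
  have h := eulerPoly_def n
  have h0 : en n = 0 ^ n - (1/2 : ℚ) * ∑ k ∈ Finset.range n, (n.choose k : ℚ) * en k := by
    have := congrArg (Polynomial.eval (0:ℚ)) h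
    simpa [en, eval_finset_sum] using this
  rw [Finset.sum_range_succ]
  rw [zero_pow hn] at h0
  simp only [Nat.choose_self, Nat.cast_one, one_mul]
  linarith [h0]

lemma eulerPolyOrder_zero' (r : ℕ) : eulerPolyOrder r 0 = 1 := by
  induction r with
  | zero => rw [eulerPolyOrder]; simp
  | succ r ih => rw [eulerPolyOrder]; simp [ih, show (eulerPoly 0).eval 0 = 1 from by simp [eulerPoly_zero]]

lemma cast_choose (j k : ℕ) :
    ((j+1-k : ℕ) : ℚ) * ((j+1).choose k : ℚ) = ((j:ℚ)+1) * (j.choose k : ℚ) := by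
  rcases le_or_gt k (j+1) with h | h
  · have := congrArg (fun x : ℕ => (x : ℚ)) (Nat.choose_mul_succ_eq j k)
    push_cast at this
    rw [mul_comm]
    rw [mul_comm ((j:ℚ)+1) _]
    exact this.symm
  · have h2 : j < k := by omega
    rw [Nat.choose_eq_zero_of_lt h, Nat.choose_eq_zero_of_lt h2]
    simp

lemma G_base (j : ℕ) :
    ∑ k ∈ Finset.range (j+1), Polynomial.C ((j.choose k : ℚ) * en k) *
      ((X:ℚ[X]) ^ (j-k) + (X + 1) ^ (j-k)) = 2 * X ^ j := by
  induction j with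
  | zero => simp [en_zero]; ring
  | succ j ih =>
    set q : ℚ[X] := (∑ k ∈ Finset.range (j+2), Polynomial.C (((j+1).choose k : ℚ) * en k) *
      ((X:ℚ[X]) ^ (j+1-k) + (X + 1) ^ (j+1-k))) - 2 * X ^ (j+1) with hq
    have hterm : ∀ k ∈ Finset.range (j+2),
        derivative (Polynomial.C (((j+1).choose k : ℚ) * en k) *
          ((X:ℚ[X]) ^ (j+1-k) + (X + 1) ^ (j+1-k)))
        = Polynomial.C (((j:ℚ)+1)) * (Polynomial.C ((j.choose k : ℚ) * en k) *
          ((X:ℚ[X]) ^ (j-k) + (X + 1) ^ (j-k))) := by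
      intro k hk
      rw [derivative_C_mul, derivative_add, derivative_pow, derivative_pow]
      simp only [derivative_X, derivative_add, derivative_one, add_zero, mul_one]
      rcases le_or_gt k j with h | h
      · have h1 : j + 1 - k = (j - k) + 1 := by omega
        rw [h1]
        simp only [Nat.add_sub_cancel]
        have hc : ((j - k + 1 : ℕ) : ℚ) = ((j + 1 - k : ℕ) : ℚ) := by congr 1; omega
        rw [← mul_add, ← mul_assoc, ← Polynomial.C_mul, ← mul_assoc, ← Polynomial.C_mul]
        congr 1
        rw [hc]
        rw [mul_comm _ ((j+1-k : ℕ) : ℚ), ← mul_assoc, cast_choose]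
        ring
      · have hk2 : k = j + 1 := by have := Finset.mem_range.mp hk; omega
        subst hk2
        simp [Nat.choose_succ_self]
    have hd : derivative q = 0 := by
      rw [hq, derivative_sub, derivative_sum, Finset.sum_congr rfl hterm,
        ← Finset.mul_sum, Finset.sum_range_succ]
      rw [Nat.choose_succ_self]
      simp only [Nat.cast_zero, zero_mul, Polynomial.C_0, zero_mul, add_zero]
      rw [ih]
      simp only [derivative_mul, derivative_pow, derivative_X, derivative_ofNat, mul_one]
      push_cast
      ring
    have hq0 : q.eval 0 = 0 := by
      rw [hq]
      simp only [Polynomial.eval_sub, Polynomial.eval_finset_sum, Polynomial.eval_mul,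
        Polynomial.eval_C, Polynomial.eval_add, Polynomial.eval_pow, Polynomial.eval_X,
        Polynomial.eval_one, Polynomial.eval_ofNat, zero_add, one_pow]
      rw [Finset.sum_congr rfl (fun k hk => by ring_nf :
        ∀ k ∈ Finset.range (j+2), (((j+1).choose k : ℚ) * en k) * ((0:ℚ) ^ (j+1-k) + 1)
          = ((j+1).choose k : ℚ) * en k * (0:ℚ) ^ (j+1-k) + ((j+1).choose k : ℚ) * en k)]
      rw [Finset.sum_add_distrib]
      have h1 : ∑ k ∈ Finset.range (j+2), ((j+1).choose k : ℚ) * en k * (0:ℚ) ^ (j+1-k)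
          = en (j+1) := by
        rw [Finset.sum_eq_single (j+1)]
        · simp
        · intro k hk hne
          have : j + 1 - k ≠ 0 := by simp at hk; omega
          simp [zero_pow this]
        · intro h; simp at h
      rw [h1, en_sum (j+1) (by omega)]
      simp
    have hdeg : q.natDegree = 0 := Polynomial.natDegree_eq_zero_of_derivative_eq_zero hd
    have : q = Polynomial.C (q.coeff 0) := Polynomial.eq_C_of_natDegree_eq_zero hdeg
    have hz : q = 0 := by
      rw [this] at hq0 ⊢
      simp at hq0
      simp [hq0]
    exact sub_eq_zero.mp hz

lemma order_succ (r n : ℕ) : eulerPolyOrder (r+1) n = ∑ k ∈ Finset.range (n+1),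
    Polynomial.C ((n.choose k : ℚ) * en k) * eulerPolyOrder r (n-k) := by
  rw [eulerPolyOrder]; rfl

lemma order_zero (n : ℕ) : eulerPolyOrder 0 n = X ^ n := by rw [eulerPolyOrder]

lemma G_poly (r j : ℕ) :
    eulerPolyOrder (r+1) j + (eulerPolyOrder (r+1) j).comp (X + 1)
      = 2 * eulerPolyOrder r j := by
  induction r generalizing j with
  | zero =>
    rw [order_succ, order_zero]
    simp only [order_zero, Polynomial.sum_comp, Polynomial.mul_comp, Polynomial.C_comp,
      Polynomial.pow_comp, Polynomial.X_comp]
    rw [← Finset.sum_add_distrib]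
    rw [← G_base j]
    apply Finset.sum_congr rfl
    intro k hk
    ring
  | succ r ih =>
    rw [order_succ (r+1), order_succ r]
    simp only [Polynomial.sum_comp, Polynomial.mul_comp, Polynomial.C_comp]
    rw [← Finset.sum_add_distrib, Finset.mul_sum]
    apply Finset.sum_congr rfl
    intro k hk
    rw [← mul_add, ih (j-k)]
    ring

lemma pascal_split (r : ℕ) (f : ℕ → ℚ) :
    ∑ l ∈ Finset.range (r+2), ((r+1).choose l : ℚ) * f l
      = ∑ l ∈ Finset.range (r+1), (r.choose l : ℚ) * (f l + f (l+1)) := by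
  rw [Finset.sum_range_succ']
  simp only [Nat.choose_succ_succ, Nat.cast_add, add_mul, Nat.choose_zero_right]
  rw [Finset.sum_add_distrib]
  have h1 : ∑ l ∈ Finset.range (r+1), (r.choose (l+1) : ℚ) * f (l+1)
      = ∑ l ∈ Finset.range (r+1), (r.choose l : ℚ) * f l - (r.choose 0 : ℚ) * f 0 := by
    have h2 := Finset.sum_range_succ' (fun i => (r.choose i : ℚ) * f i) (r+1)
    rw [Finset.sum_range_succ, Nat.choose_succ_self] at h2
    simp only [Nat.cast_zero, zero_mul, add_zero] at h2
    rw [eq_sub_iff_add_eq, ← h2]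
  rw [h1]
  simp only [mul_add, Finset.sum_add_distrib]
  simp [Nat.choose_zero_right]
  ring

lemma shift_sum (r j : ℕ) (x : ℚ) :
    ∑ l ∈ Finset.range (r+1), (r.choose l : ℚ) * (eulerPolyOrder r j).eval (x + l)
      = 2 ^ r * x ^ j := by
  induction r generalizing x with
  | zero => simp [order_zero]
  | succ r ih =>
    rw [pascal_split r (fun l => (eulerPolyOrder (r+1) j).eval (x + l))]
    have key : ∀ l : ℕ, (eulerPolyOrder (r+1) j).eval (x + l)
        + (eulerPolyOrder (r+1) j).eval (x + ((l+1:ℕ):ℚ))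
        = 2 * (eulerPolyOrder r j).eval (x + l) := by
      intro l
      have := congrArg (Polynomial.eval (x + l)) (G_poly r j)
      simp only [Polynomial.eval_add, Polynomial.eval_mul, Polynomial.eval_comp,
        Polynomial.eval_X, Polynomial.eval_one, Polynomial.eval_ofNat] at this
      convert this using 2
      push_cast
      ring
    calc ∑ l ∈ Finset.range (r+1), (r.choose l : ℚ) *
          ((eulerPolyOrder (r+1) j).eval (x + l) + (eulerPolyOrder (r+1) j).eval (x + ((l+1:ℕ):ℚ)))
        = ∑ l ∈ Finset.range (r+1), (r.choose l : ℚ) * (2 * (eulerPolyOrder r j).eval (x + l)) := by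
          apply Finset.sum_congr rfl; intro l hl; rw [key l]
      _ = 2 * ∑ l ∈ Finset.range (r+1), (r.choose l : ℚ) * (eulerPolyOrder r j).eval (x + l) := by
          rw [Finset.mul_sum]; apply Finset.sum_congr rfl; intro l hl; ring
      _ = 2 ^ (r+1) * x ^ j := by rw [ih]; ring

lemma deriv_order (r m : ℕ) :
    derivative (eulerPolyOrder r (m+1)) = Polynomial.C ((m:ℚ)+1) * eulerPolyOrder r m := by
  induction r generalizing m with
  | zero =>
    rw [order_zero, order_zero, derivative_X_pow]
    push_cast; ring
  | succ r ih =>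
    rw [order_succ r (m+1), order_succ r m, derivative_sum]
    rw [Finset.sum_range_succ]
    have hlast : derivative (Polynomial.C (((m+1).choose (m+1) : ℚ) * en (m+1)) *
        eulerPolyOrder r (m+1-(m+1))) = 0 := by
      simp [eulerPolyOrder_zero']
    rw [hlast, add_zero, Finset.mul_sum]
    apply Finset.sum_congr rfl
    intro k hk
    have hk' : k ≤ m := by have := Finset.mem_range.mp hk; omega
    have h1 : m + 1 - k = (m - k) + 1 := by omega
    rw [derivative_C_mul, h1, ih (m-k)]
    rw [← mul_assoc, ← Polynomial.C_mul, ← mul_assoc, ← Polynomial.C_mul]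
    congr 2
    have h2 : ((m - k : ℕ) : ℚ) + 1 = ((m + 1 - k : ℕ) : ℚ) := by
      rw [show m + 1 - k = (m - k) + 1 from h1]; push_cast; ring
    rw [mul_comm, ← mul_assoc, h2, cast_choose m k]
    ring

lemma deriv_iter (r m k : ℕ) :
    derivative^[k] (eulerPolyOrder r m)
      = Polynomial.C ((m.descFactorial k : ℕ) : ℚ) * eulerPolyOrder r (m - k) := by
  induction k with
  | zero => simp
  | succ k ih =>
    rw [Function.iterate_succ_apply', ih, derivative_C_mul]
    rcases lt_or_ge k m with h | h
    · have h1 : m - k = (m - (k+1)) + 1 := by omega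
      rw [h1, deriv_order]
      rw [← mul_assoc, ← Polynomial.C_mul]
      congr 2
      rw [Nat.descFactorial_succ]
      have h2 : ((m - (k+1) : ℕ) : ℚ) + 1 = ((m - k : ℕ) : ℚ) := by
        rw [h1]; push_cast; ring
      push_cast
      rw [mul_comm, h2]
    · have h1 : m - k = 0 := by omega
      rw [h1, eulerPolyOrder_zero']
      rw [Nat.descFactorial_succ, h1]
      simp [Nat.sub_eq_zero_of_le h]

theorem coeff_in_euler_order_basis (n r : ℕ) (hr : 1 ≤ r) (p : ℚ[X])
    (hp : p.natDegree ≤ n) (b : ℕ → ℚ)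
    (hb : p = ∑ k ∈ Finset.range (n + 1), Polynomial.C (b k) * eulerPolyOrder r k)
    (k : ℕ) (hk : k ≤ n) :
    b k = (1 / (2 ^ r * (k.factorial : ℚ))) *
      ∑ l ∈ Finset.range (r + 1),
        (r.choose l : ℚ) * ((derivative^[k]) p).eval (l : ℚ) := by
  have hderiv : derivative^[k] p = ∑ j ∈ Finset.range (n+1),
      Polynomial.C (b j * ((j.descFactorial k : ℕ) : ℚ)) * eulerPolyOrder r (j - k) := by
    rw [hb, Polynomial.iterate_derivative_sum]
    apply Finset.sum_congr rfl
    intro j hj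
    rw [Polynomial.iterate_derivative_C_mul, deriv_iter, ← mul_assoc, ← Polynomial.C_mul]
  have hsum : ∑ l ∈ Finset.range (r + 1), (r.choose l : ℚ) * ((derivative^[k]) p).eval (l : ℚ)
      = 2 ^ r * (k.factorial : ℚ) * b k := by
    rw [hderiv]
    simp only [Polynomial.eval_finset_sum, Polynomial.eval_mul, Polynomial.eval_C]
    rw [Finset.sum_congr rfl (fun l _ => Finset.mul_sum _ _ _), Finset.sum_comm]
    have hinner : ∀ j ∈ Finset.range (n+1),
        ∑ l ∈ Finset.range (r+1), (r.choose l : ℚ) *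
          ((b j * ((j.descFactorial k : ℕ) : ℚ)) * (eulerPolyOrder r (j-k)).eval (l : ℚ))
        = (b j * ((j.descFactorial k : ℕ) : ℚ)) * (2 ^ r * (0:ℚ) ^ (j - k)) := by
      intro j hj
      rw [← shift_sum r (j-k) 0]
      rw [Finset.mul_sum]
      apply Finset.sum_congr rfl
      intro l hl
      rw [zero_add]
      ring
    rw [Finset.sum_congr rfl hinner]
    rw [Finset.sum_eq_single k]
    · rw [Nat.sub_self, pow_zero, Nat.descFactorial_self]
      ring
    · intro j hj hne
      rcases lt_or_gt_of_ne hne with h | h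
      · rw [Nat.descFactorial_eq_zero_iff_lt.mpr h]
        simp
      · rw [zero_pow (by omega : j - k ≠ 0)]
        ring
    · intro h
      exact absurd (Finset.mem_range.mpr (by omega)) h
  rw [hsum]
  have h2 : (2:ℚ) ^ r ≠ 0 := by positivity
  have h3 : (k.factorial : ℚ) ≠ 0 := Nat.cast_ne_zero.mpr (Nat.factorial_ne_zero k)
  field_simp
end
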